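/- arXiv:1807.06733 — 5 statements merged into one kernel-verified Lean document; each statement's English description precedes it below -/
import Mathlib

section
/- Let C be a triangulated category with split idempotents and let X be a cluster-tilting subcategory of C. Then the additive quotient category C/X is an abelian category. -/
open CategoryTheory CategoryTheory.Limits CategoryTheory.Pretriangulated

universe v u

variable {C : Type u} [Category.{v} C] [Preadditive C] [HasZeroObject C]
  [HasShift C ℤ] [∀ n : ℤ, (shiftFunctor C n).Additive] [Pretriangulated C]

/-- `f` factors through an object satisfying `X`. -/
def FactorsThru (X : C → Prop) {A B : C} (f : A ⟶ B) : Prop :=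
  ∃ (X₀ : C) (g : A ⟶ X₀) (h : X₀ ⟶ B), X X₀ ∧ g ≫ h = f

/-- The hom relation on `C` identifying two morphisms when their difference factors
through an object of `X`; the quotient category `C/X` is the quotient by this relation. -/
def homRelOf (X : C → Prop) : HomRel C :=
  fun {A B : C} (f g : A ⟶ B) => FactorsThru X (f - g)

/-- The additive quotient category `C/X`. -/
abbrev QuotCat (X : C → Prop) := CategoryTheory.Quotient (homRelOf X)

/-- The quotient functor `C ⥤ C/X`, sending a morphism `f` to its class `f̄`. -/
abbrev quotFunctor (X : C → Prop) : C ⥤ QuotCat X := Quotient.functor _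

/-- `X` is a full additive subcategory: it contains the zero objects and is closed under
isomorphisms, finite direct sums and direct summands. -/
structure IsAdditiveClosed (X : C → Prop) : Prop where
  zero : ∀ Z : C, IsZero Z → X Z
  iso : ∀ {A B : C}, (A ≅ B) → X A → X B
  biprod : ∀ {A B : C} (b : BinaryBicone A B), Nonempty b.IsBilimit → X A → X B → X b.pt
  summand : ∀ {A B : C} (i : A ⟶ B) (p : B ⟶ A), i ≫ p = 𝟙 A → X B → X A

/-- `X` is a cluster-tilting subcategory of the triangulated category `C`:
it is a full additive subcategory such that (i) `Hom(X₁, ΣX₂) = 0` for all `X₁, X₂ ∈ X`, and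
(ii) every object `A` fits into a distinguished triangle `X₀ ⟶ X₁ ⟶ A ⟶ ΣX₀` with
`X₀, X₁ ∈ X`. -/
structure IsClusterTilting (X : C → Prop) extends IsAdditiveClosed X : Prop where
  hom_shift_zero : ∀ {X₁ X₂ : C}, X X₁ → X X₂ → ∀ f : X₁ ⟶ X₂⟦(1 : ℤ)⟧, f = 0
  exists_triangle : ∀ A : C, ∃ (X₀ X₁ : C) (f : X₀ ⟶ X₁) (g : X₁ ⟶ A) (h : A ⟶ X₀⟦(1 : ℤ)⟧),
    X X₀ ∧ X X₁ ∧ Triangle.mk f g h ∈ distTriang C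

/-- `f : A ⟶ B` is `X`-monic: every morphism from `A` to an object of `X` factors through `f`. -/
def XMonic (X : C → Prop) {A B : C} (f : A ⟶ B) : Prop :=
  ∀ X' : C, X X' → ∀ u : A ⟶ X', ∃ v : B ⟶ X', f ≫ v = u

/-- `f : A ⟶ B` is `X`-epic: every morphism from an object of `X` to `B` factors through `f`. -/
def XEpic (X : C → Prop) {A B : C} (f : A ⟶ B) : Prop :=
  ∀ X' : C, X X' → ∀ u : X' ⟶ B, ∃ v : X' ⟶ A, v ≫ f = u

/-!
Work in `C` modulo the ideal of morphisms factoring through `X`. For `f : A ⟶ B`, a triangle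
`X₀ ⟶ X₁ ⟶ B ⟶ X₀⟦1⟧` with `Xᵢ ∈ X` makes `π : X₁ ⟶ B` a right `X`-approximation, and the fibre
`K ⟶ A ⊞ X₁` of `(f, π)`, followed by the projection to `A`, becomes a kernel of `f̄`; cokernels
are dual, via a triangle `A ⟶ X₀ ⟶ X₁ ⟶ A⟦1⟧`. A monomorphism `ḡ` is the kernel of the image of
the cone map of `g`, and an epimorphism `f̄` the cokernel of the image of the fibre map of `f`.
Each universal property comes down to `Hom(X, X⟦1⟧) = 0`: a morphism between `X` and a shifted
object that becomes zero modulo `X` is already zero, so the connecting maps of the triangles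
involved can be killed.
-/

open ZeroObject

namespace FactorsThru

variable {D : Type*} [Category D] {X : D → Prop}

lemma of_comp {A W B : D} (hW : X W) (a : A ⟶ W) (b : W ⟶ B) : FactorsThru X (a ≫ b) :=
  ⟨W, a, b, hW, rfl⟩

lemma comp_left {A' A B : D} (g : A' ⟶ A) {f : A ⟶ B} (hf : FactorsThru X f) :
    FactorsThru X (g ≫ f) := by
  obtain ⟨W, a, b, hW, rfl⟩ := hf
  exact ⟨W, g ≫ a, b, hW, by simp⟩

lemma comp_right {A B B' : D} {f : A ⟶ B} (hf : FactorsThru X f) (g : B ⟶ B') :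
    FactorsThru X (f ≫ g) := by
  obtain ⟨W, a, b, hW, rfl⟩ := hf
  exact ⟨W, a, b ≫ g, hW, by simp⟩

variable [Preadditive D]

lemma neg {A B : D} {f : A ⟶ B} (hf : FactorsThru X f) : FactorsThru X (-f) := by
  obtain ⟨W, a, b, hW, rfl⟩ := hf
  exact ⟨W, a, -b, hW, by simp⟩

lemma zero_of_mem {W : D} (hW : X W) {A B : D} : FactorsThru X (0 : A ⟶ B) :=
  ⟨W, 0, 0, hW, by simp⟩

lemma zero [HasZeroObject D] (hX : IsAdditiveClosed X) {A B : D} : FactorsThru X (0 : A ⟶ B) :=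
  zero_of_mem (hX.zero _ (isZero_zero D))

variable [HasBinaryBiproducts D]

lemma add (hX : IsAdditiveClosed X) {A B : D} {f g : A ⟶ B}
    (hf : FactorsThru X f) (hg : FactorsThru X g) : FactorsThru X (f + g) := by
  obtain ⟨W₁, a₁, b₁, hW₁, rfl⟩ := hf
  obtain ⟨W₂, a₂, b₂, hW₂, rfl⟩ := hg
  exact ⟨W₁ ⊞ W₂, biprod.lift a₁ a₂, biprod.desc b₁ b₂,
    hX.biprod _ ⟨BinaryBiproduct.isBilimit _ _⟩ hW₁ hW₂, by simp⟩

lemma of_comp_biprod_fst (hX : IsAdditiveClosed X) {T A W : D} (hW : X W) {g : T ⟶ A ⊞ W}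
    (hg : FactorsThru X (g ≫ biprod.fst)) : FactorsThru X g := by
  rw [← Category.comp_id g, ← biprod.total, Preadditive.comp_add, ← Category.assoc,
    ← Category.assoc]
  exact (hg.comp_right _).add hX (of_comp hW _ _)

lemma of_biprod_inl_comp (hX : IsAdditiveClosed X) {A W T : D} (hW : X W) {g : A ⊞ W ⟶ T}
    (hg : FactorsThru X (biprod.inl ≫ g)) : FactorsThru X g := by
  rw [← Category.id_comp g, ← biprod.total, Preadditive.add_comp, Category.assoc,
    Category.assoc]
  exact (hg.comp_left _).add hX (of_comp hW _ _)

end FactorsThru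

lemma IsAdditiveClosed.homRelOf_add {D : Type*} [Category D] [Preadditive D]
    [HasBinaryBiproducts D] {X : D → Prop} (hX : IsAdditiveClosed X) {A B : D}
    {f₁ f₂ g₁ g₂ : A ⟶ B} (hf : homRelOf X f₁ f₂) (hg : homRelOf X g₁ g₂) :
    homRelOf X (f₁ + g₁) (f₂ + g₂) := by
  simpa [homRelOf, add_sub_add_comm] using hf.add hX hg

section Modulo

variable {D : Type*} [Category D] [Preadditive D] (X : D → Prop)

def IsMonoModulo {K A : D} (k : K ⟶ A) : Prop :=
  ∀ ⦃T : D⦄ (w : T ⟶ K), FactorsThru X (w ≫ k) → FactorsThru X w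

def IsEpiModulo {B Q : D} (c : B ⟶ Q) : Prop :=
  ∀ ⦃T : D⦄ (m : Q ⟶ T), FactorsThru X (c ≫ m) → FactorsThru X m

/-- The image of `k` in the quotient by `X` is a weak kernel of the image of `f`. -/
structure IsWeakKernelModulo {K A B : D} (k : K ⟶ A) (f : A ⟶ B) : Prop where
  factorsThru_comp : FactorsThru X (k ≫ f)
  lift : ∀ ⦃T : D⦄ (t : T ⟶ A), FactorsThru X (t ≫ f) → ∃ w : T ⟶ K, FactorsThru X (t - w ≫ k)

/-- The image of `c` in the quotient by `X` is a weak cokernel of the image of `f`. -/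
structure IsWeakCokernelModulo {A B Q : D} (c : B ⟶ Q) (f : A ⟶ B) : Prop where
  factorsThru_comp : FactorsThru X (f ≫ c)
  desc : ∀ ⦃T : D⦄ (t : B ⟶ T), FactorsThru X (f ≫ t) → ∃ m : Q ⟶ T, FactorsThru X (t - c ≫ m)

end Modulo

section Quotient

variable {D : Type*} [Category D] [Preadditive D] [HasZeroObject D] [HasBinaryBiproducts D]
  {X : D → Prop} [hX : Fact (IsAdditiveClosed X)]

-- Recording `IsAdditiveClosed X` as a `Fact` makes the additive structure of `QuotCat X` an
-- instance.

instance : Congruence (homRelOf X) where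
  equivalence :=
    { refl _ := by simpa [homRelOf] using FactorsThru.zero hX.out
      symm h := by simpa [homRelOf] using FactorsThru.neg h
      trans h₁ h₂ := by simpa [homRelOf] using h₁.add hX.out h₂ }
  comp_left f _ _ h := by simpa [homRelOf, Preadditive.comp_sub] using h.comp_left f
  comp_right g h := by simpa [homRelOf, Preadditive.sub_comp] using h.comp_right g

instance : Preadditive (QuotCat X) :=
  Quotient.preadditive _ fun _ _ _ _ _ _ => hX.out.homRelOf_add

instance : (quotFunctor X).Additive :=
  Quotient.functor_additive _ fun _ _ _ _ _ _ => hX.out.homRelOf_add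

lemma quotFunctor_map_eq_zero_iff {A B : D} (f : A ⟶ B) :
    (quotFunctor X).map f = 0 ↔ FactorsThru X f := by
  rw [← (quotFunctor X).map_zero, Quotient.functor_map_eq_iff]
  simp [homRelOf]

instance : HasZeroObject (QuotCat X) :=
  ⟨⟨(quotFunctor X).obj 0, (quotFunctor X).map_isZero (isZero_zero D)⟩⟩

instance : HasBinaryBiproducts (QuotCat X) where
  has_binary_biproduct P Q :=
    have := preservesBinaryBiproduct_of_preservesBiproduct (quotFunctor X) P.as Q.as
    Functor.hasBinaryBiproduct_of_preserves (quotFunctor X) P.as Q.as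

instance : HasFiniteProducts (QuotCat X) := hasFiniteProducts_of_has_binary_and_terminal

lemma quotFunctor_map_eq_iff {A B : D} (f g : A ⟶ B) :
    (quotFunctor X).map f = (quotFunctor X).map g ↔ FactorsThru X (f - g) := by
  rw [← sub_eq_zero, ← Functor.map_sub, quotFunctor_map_eq_zero_iff]

lemma mono_quotFunctor_map_iff {K A : D} (k : K ⟶ A) :
    Mono ((quotFunctor X).map k) ↔ IsMonoModulo X k := by
  constructor
  · intro _ T w hw
    rw [← quotFunctor_map_eq_zero_iff, Functor.map_comp] at hw
    rw [← quotFunctor_map_eq_zero_iff]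
    exact (cancel_mono _).1 (hw.trans zero_comp.symm)
  · refine fun hk => Preadditive.mono_of_cancel_zero _ fun w hw => ?_
    obtain ⟨w, rfl⟩ := (quotFunctor X).map_surjective w
    rw [← Functor.map_comp, quotFunctor_map_eq_zero_iff] at hw
    rw [quotFunctor_map_eq_zero_iff]
    exact hk w hw

lemma epi_quotFunctor_map_iff {B Q : D} (c : B ⟶ Q) :
    Epi ((quotFunctor X).map c) ↔ IsEpiModulo X c := by
  constructor
  · intro _ T m hm
    rw [← quotFunctor_map_eq_zero_iff, Functor.map_comp] at hm
    rw [← quotFunctor_map_eq_zero_iff]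
    exact (cancel_epi _).1 (hm.trans comp_zero.symm)
  · refine fun hc => Preadditive.epi_of_cancel_zero _ fun m hm => ?_
    obtain ⟨m, rfl⟩ := (quotFunctor X).map_surjective m
    rw [← Functor.map_comp, quotFunctor_map_eq_zero_iff] at hm
    rw [quotFunctor_map_eq_zero_iff]
    exact hc m hm

namespace IsWeakKernelModulo

variable {K A B : D} {k : K ⟶ A} {f : A ⟶ B} (hk : IsWeakKernelModulo X k f)
include hk

lemma map_comp_eq_zero : (quotFunctor X).map k ≫ (quotFunctor X).map f = 0 := by
  rw [← Functor.map_comp, quotFunctor_map_eq_zero_iff]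
  exact hk.factorsThru_comp

lemma exists_lift {T : QuotCat X} (t : T ⟶ (quotFunctor X).obj A)
    (ht : t ≫ (quotFunctor X).map f = 0) : ∃ w, w ≫ (quotFunctor X).map k = t := by
  obtain ⟨t, rfl⟩ := (quotFunctor X).map_surjective t
  rw [← Functor.map_comp, quotFunctor_map_eq_zero_iff] at ht
  obtain ⟨w, hw⟩ := hk.lift t ht
  refine ⟨(quotFunctor X).map w, ?_⟩
  rwa [← Functor.map_comp, eq_comm, quotFunctor_map_eq_iff]

noncomputable def isLimit [Mono ((quotFunctor X).map k)] :
    IsLimit (KernelFork.ofι _ hk.map_comp_eq_zero) :=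
  KernelFork.IsLimit.ofι' _ _ fun t ht => ⟨_, (hk.exists_lift t ht).choose_spec⟩

end IsWeakKernelModulo

namespace IsWeakCokernelModulo

variable {A B Q : D} {c : B ⟶ Q} {f : A ⟶ B} (hc : IsWeakCokernelModulo X c f)
include hc

lemma map_comp_eq_zero : (quotFunctor X).map f ≫ (quotFunctor X).map c = 0 := by
  rw [← Functor.map_comp, quotFunctor_map_eq_zero_iff]
  exact hc.factorsThru_comp

lemma exists_desc {T : QuotCat X} (t : (quotFunctor X).obj B ⟶ T)
    (ht : (quotFunctor X).map f ≫ t = 0) : ∃ m, (quotFunctor X).map c ≫ m = t := by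
  obtain ⟨t, rfl⟩ := (quotFunctor X).map_surjective t
  rw [← Functor.map_comp, quotFunctor_map_eq_zero_iff] at ht
  obtain ⟨m, hm⟩ := hc.desc t ht
  refine ⟨(quotFunctor X).map m, ?_⟩
  rwa [← Functor.map_comp, eq_comm, quotFunctor_map_eq_iff]

noncomputable def isColimit [Epi ((quotFunctor X).map c)] :
    IsColimit (CokernelCofork.ofπ _ hc.map_comp_eq_zero) :=
  CokernelCofork.IsColimit.ofπ' _ _ fun t ht => ⟨_, (hc.exists_desc t ht).choose_spec⟩

end IsWeakCokernelModulo

end Quotient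

lemma yoneda_exact₁_of_distTriang {T : Triangle C} (hT : T ∈ distTriang C)
    {W : C} (p : T.obj₁ ⟶ W) (hp : T.mor₃ ≫ p⟦(1 : ℤ)⟧' = 0) :
    ∃ e : T.obj₂ ⟶ W, T.mor₁ ≫ e = p := by
  obtain ⟨g, hg⟩ := Triangle.yoneda_exact₃ _ (rot_of_distTriang _ hT) _ hp
  obtain ⟨e, rfl⟩ : ∃ e : T.obj₂ ⟶ W, e⟦(1 : ℤ)⟧' = g := (shiftFunctor C (1 : ℤ)).map_surjective g
  refine ⟨-e, (shiftFunctor C (1 : ℤ)).map_injective ?_⟩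
  rw [Functor.map_comp, Functor.map_neg, Preadditive.comp_neg, ← Preadditive.neg_comp]
  exact hg.symm

lemma mk_iso_comp_mem_distTriang {T : Triangle C}
    (hT : T ∈ distTriang C) {A : C} (e : A ≅ T.obj₁) :
    Triangle.mk (e.hom ≫ T.mor₁) T.mor₂ (T.mor₃ ≫ e.inv⟦(1 : ℤ)⟧') ∈ distTriang C :=
  isomorphic_distinguished _ hT _ <| Triangle.isoMk (Triangle.mk _ _ _) T e (Iso.refl _)
    (Iso.refl _) (by simp [Triangle.mk]) (by simp [Triangle.mk])
    (by simp [Triangle.mk, ← Functor.map_comp])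

namespace IsClusterTilting

variable {X : C → Prop} (hX : IsClusterTilting X)
include hX

lemma hom_shift_neg_one_eq_zero {W₁ W₂ : C} (h₁ : X W₁) (h₂ : X W₂) (s : W₁⟦(-1 : ℤ)⟧ ⟶ W₂) :
    s = 0 := by
  apply (shiftFunctor C (1 : ℤ)).map_injective
  rw [Functor.map_zero]
  exact (cancel_epi ((shiftEquiv C (1 : ℤ)).counitIso.inv.app W₁)).1
    ((hX.hom_shift_zero h₁ h₂ _).trans comp_zero.symm)

lemma eq_zero_of_factorsThru_to_shift {T W : C} (hW : X W) {s : T ⟶ W⟦(1 : ℤ)⟧}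
    (hs : FactorsThru X s) : s = 0 := by
  obtain ⟨W', a, b, hW', rfl⟩ := hs
  rw [hX.hom_shift_zero hW' hW b, comp_zero]

lemma eq_zero_of_factorsThru_from_shift {W T : C} (hW : X W) {s : W⟦(-1 : ℤ)⟧ ⟶ T}
    (hs : FactorsThru X s) : s = 0 := by
  obtain ⟨W', a, b, hW', rfl⟩ := hs
  rw [hX.hom_shift_neg_one_eq_zero hW hW' a, zero_comp]

lemma xEpic_of_distTriang {X₀ X₁ B : C} {x : X₀ ⟶ X₁} {π : X₁ ⟶ B} {ω : B ⟶ X₀⟦(1 : ℤ)⟧}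
    (hX₀ : X X₀) (hT : Triangle.mk x π ω ∈ distTriang C) : XEpic X π := fun W hW u => by
  obtain ⟨v, hv⟩ := Triangle.coyoneda_exact₃ _ hT u (hX.hom_shift_zero hW hX₀ _)
  exact ⟨v, hv.symm⟩

lemma factorsThru_of_forall_comp_eq_zero {T M : C} (w : T ⟶ M)
    (h : ∀ W, X W → ∀ u : M ⟶ W⟦(1 : ℤ)⟧, w ≫ u = 0) : FactorsThru X w := by
  obtain ⟨X₀, X₁, x, π, ω, hX₀, hX₁, hT⟩ := hX.exists_triangle M
  obtain ⟨v, rfl⟩ := Triangle.coyoneda_exact₃ _ hT w (h X₀ hX₀ ω)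
  exact .of_comp hX₁ _ _

lemma exists_triangle_from (A : C) :
    ∃ (X₀ X₁ : C) (α : A ⟶ X₀) (a : X₀ ⟶ X₁) (b : X₁ ⟶ A⟦(1 : ℤ)⟧),
      X X₀ ∧ X X₁ ∧ Triangle.mk α a b ∈ distTriang C := by
  obtain ⟨X₀, X₁, x, π, ω, hX₀, hX₁, hT⟩ := hX.exists_triangle (A⟦(1 : ℤ)⟧)
  exact ⟨X₀, X₁, _, _, _, hX₀, hX₁, mk_iso_comp_mem_distTriang
    (inv_rot_of_distTriang _ hT) ((shiftEquiv C (1 : ℤ)).unitIso.app A)⟩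

lemma xMonic_of_distTriang {A X₀ X₁ : C} {α : A ⟶ X₀} {a : X₀ ⟶ X₁} {b : X₁ ⟶ A⟦(1 : ℤ)⟧}
    (hX₁ : X X₁) (hT : Triangle.mk α a b ∈ distTriang C) : XMonic X α := fun W hW u => by
  obtain ⟨v, hv⟩ := Triangle.yoneda_exact₂ _ (inv_rot_of_distTriang _ hT) u
    (hX.hom_shift_neg_one_eq_zero hX₁ hW _)
  exact ⟨v, hv.symm⟩

lemma factorsThru_of_forall_shift_comp_eq_zero {M Y : C} (m : M ⟶ Y)
    (h : ∀ W, X W → ∀ s : W⟦(-1 : ℤ)⟧ ⟶ M, s ≫ m = 0) : FactorsThru X m := by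
  obtain ⟨X₀, X₁, α, a, b, hX₀, hX₁, hT⟩ := hX.exists_triangle_from M
  obtain ⟨v, rfl⟩ := Triangle.yoneda_exact₂ _ (inv_rot_of_distTriang _ hT) m (h X₁ hX₁ _)
  exact .of_comp hX₀ _ _

end IsClusterTilting

section WeakKernels

variable {X : C → Prop}

lemma isWeakKernelModulo_of_distTriang {A B X₁ K : C} {f : A ⟶ B} {π : X₁ ⟶ B}
    (hπ : XEpic X π) (hX₁ : X X₁) {k : K ⟶ A ⊞ X₁} {h : B ⟶ K⟦(1 : ℤ)⟧}
    (hT : Triangle.mk k (biprod.desc f π) h ∈ distTriang C) :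
    IsWeakKernelModulo X (k ≫ biprod.fst) f := by
  have hk : k ≫ biprod.desc f π = 0 := comp_distTriang_mor_zero₁₂ _ hT
  constructor
  · have : (k ≫ biprod.fst) ≫ f = -((k ≫ biprod.snd) ≫ π) := by
      rw [biprod.desc_eq, Preadditive.comp_add] at hk
      simpa [eq_neg_iff_add_eq_zero] using hk
    rw [this]
    exact (FactorsThru.of_comp hX₁ _ _).neg
  · rintro T t ⟨W, p, q, hW, hpq⟩
    obtain ⟨v, hv⟩ := hπ W hW q
    have h0 : biprod.lift t (-(p ≫ v)) ≫ biprod.desc f π = 0 := by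
      rw [biprod.lift_desc, Preadditive.neg_comp, Category.assoc, hv, hpq, add_neg_cancel]
    obtain ⟨w, hw⟩ : ∃ w : T ⟶ K, biprod.lift t (-(p ≫ v)) = w ≫ k :=
      Triangle.coyoneda_exact₂ _ hT _ h0
    refine ⟨w, ?_⟩
    have : t = w ≫ k ≫ biprod.fst := by simpa using congr_arg (· ≫ biprod.fst) hw
    rw [← this, sub_self]
    exact .zero_of_mem hX₁

lemma isWeakCokernelModulo_of_distTriang {A B X₀ Q : C} {f : A ⟶ B} {α : A ⟶ X₀}
    (hα : XMonic X α) (hX₀ : X X₀) {c : B ⊞ X₀ ⟶ Q} {γ : Q ⟶ A⟦(1 : ℤ)⟧}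
    (hT : Triangle.mk (biprod.lift f α) c γ ∈ distTriang C) :
    IsWeakCokernelModulo X (biprod.inl ≫ c) f := by
  have hc : biprod.lift f α ≫ c = 0 := comp_distTriang_mor_zero₁₂ _ hT
  constructor
  · have : f ≫ biprod.inl ≫ c = -(α ≫ biprod.inr ≫ c) := by
      rw [biprod.lift_eq, Preadditive.add_comp] at hc
      simpa [eq_neg_iff_add_eq_zero] using hc
    rw [this]
    exact (FactorsThru.of_comp hX₀ _ _).neg
  · rintro T t ⟨W, p, q, hW, hpq⟩
    obtain ⟨v, hv⟩ := hα W hW p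
    have h0 : biprod.lift f α ≫ biprod.desc t (-(v ≫ q)) = 0 := by
      rw [biprod.lift_desc, Preadditive.comp_neg, ← Category.assoc, hv, hpq, add_neg_cancel]
    obtain ⟨m, hm⟩ : ∃ m : Q ⟶ T, biprod.desc t (-(v ≫ q)) = c ≫ m :=
      Triangle.yoneda_exact₂ _ hT _ h0
    refine ⟨m, ?_⟩
    have : t = biprod.inl ≫ c ≫ m := by simpa using congr_arg (biprod.inl ≫ ·) hm
    rw [Category.assoc, ← this, sub_self]
    exact .zero_of_mem hX₀

end WeakKernels

namespace IsClusterTilting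

variable {X : C → Prop} (hX : IsClusterTilting X)
include hX

lemma isMonoModulo_of_distTriang {A B X₀ X₁ K : C} {f : A ⟶ B} {x : X₀ ⟶ X₁} {π : X₁ ⟶ B}
    {ω : B ⟶ X₀⟦(1 : ℤ)⟧} (hX₀ : X X₀) (hX₁ : X X₁) (hB : Triangle.mk x π ω ∈ distTriang C)
    {k : K ⟶ A ⊞ X₁} {h : B ⟶ K⟦(1 : ℤ)⟧}
    (hT : Triangle.mk k (biprod.desc f π) h ∈ distTriang C) :
    IsMonoModulo X (k ≫ biprod.fst) := by
  intro T w hw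
  have hwk : FactorsThru X (w ≫ k) :=
    .of_comp_biprod_fst hX.toIsAdditiveClosed hX₁ (by simpa using hw)
  obtain ⟨ψ, -, hψ⟩ : ∃ ψ : X₀ ⟶ K, x ≫ biprod.inr = ψ ≫ k ∧ ω ≫ ψ⟦(1 : ℤ)⟧' = 𝟙 B ≫ h :=
    complete_distinguished_triangle_morphism₁ _ _ hB hT biprod.inr (𝟙 B) (by
      change π ≫ 𝟙 B = biprod.inr ≫ biprod.desc f π
      simp)
  refine hX.factorsThru_of_forall_comp_eq_zero w fun W hW u => ?_
  -- `u` extends along `k` since the connecting map `h` factors through `ω : B ⟶ X₀⟦1⟧`.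
  have hu : h ≫ u⟦(1 : ℤ)⟧' = 0 := by
    rw [← Category.id_comp h, ← hψ, Category.assoc, ← Functor.map_comp,
      hX.hom_shift_zero hX₀ hW (ψ ≫ u), Functor.map_zero, comp_zero]
  obtain ⟨e, rfl⟩ : ∃ e : A ⊞ X₁ ⟶ W⟦(1 : ℤ)⟧, k ≫ e = u := yoneda_exact₁_of_distTriang hT u hu
  rw [← Category.assoc]
  exact hX.eq_zero_of_factorsThru_to_shift hW (hwk.comp_right e)

lemma isEpiModulo_of_distTriang {A B X₀ X₁ Q : C} {f : A ⟶ B} {α : A ⟶ X₀} {a : X₀ ⟶ X₁}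
    {b : X₁ ⟶ A⟦(1 : ℤ)⟧} (hX₀ : X X₀) (hX₁ : X X₁) (hA : Triangle.mk α a b ∈ distTriang C)
    {c : B ⊞ X₀ ⟶ Q} {γ : Q ⟶ A⟦(1 : ℤ)⟧}
    (hT : Triangle.mk (biprod.lift f α) c γ ∈ distTriang C) :
    IsEpiModulo X (biprod.inl ≫ c) := by
  intro T m hm
  have hcm : FactorsThru X (c ≫ m) :=
    .of_biprod_inl_comp hX.toIsAdditiveClosed hX₀ (by simpa using hm)
  obtain ⟨d, -, hd⟩ : ∃ d : Q ⟶ X₁, c ≫ d = biprod.snd ≫ a ∧ γ ≫ (𝟙 A)⟦(1 : ℤ)⟧' = d ≫ b :=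
    complete_distinguished_triangle_morphism _ _ hT hA (𝟙 A) biprod.snd (by
      change biprod.lift f α ≫ biprod.snd = 𝟙 A ≫ α
      simp)
  refine hX.factorsThru_of_forall_shift_comp_eq_zero m fun W hW s => ?_
  -- `s` lifts along `c` since the connecting map `γ` factors through `b : X₁ ⟶ A⟦1⟧`.
  have hs : s ≫ γ = 0 := by
    rw [(shiftFunctor C (1 : ℤ)).map_id, Category.comp_id] at hd
    rw [hd, ← Category.assoc, hX.hom_shift_neg_one_eq_zero hW hX₁ (s ≫ d), zero_comp]
  obtain ⟨s', rfl⟩ : ∃ s' : W⟦(-1 : ℤ)⟧ ⟶ B ⊞ X₀, s = s' ≫ c :=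
    Triangle.coyoneda_exact₃ _ hT s hs
  rw [Category.assoc]
  exact hX.eq_zero_of_factorsThru_from_shift hW (hcm.comp_left s')

lemma eq_zero_of_comp_shift_map_eq_zero {A B W : C} {g : A ⟶ B} (hg : IsMonoModulo X g)
    (hW : X W) {u : W ⟶ A⟦(1 : ℤ)⟧} (hu : u ≫ g⟦(1 : ℤ)⟧' = 0) : u = 0 := by
  -- Desuspend `u` to `s : W⟦-1⟧ ⟶ A`: then `s ≫ g = 0`, so `s` factors through `X`, and
  -- `Hom(W⟦-1⟧, X) = 0`.
  let e : W⟦(-1 : ℤ)⟧⟦(1 : ℤ)⟧ ≅ W := (shiftEquiv C (1 : ℤ)).counitIso.app W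
  obtain ⟨s, hs⟩ : ∃ s : W⟦(-1 : ℤ)⟧ ⟶ A, s⟦(1 : ℤ)⟧' = e.hom ≫ u :=
    (shiftFunctor C (1 : ℤ)).map_surjective _
  have hsg : s ≫ g = 0 := (shiftFunctor C (1 : ℤ)).map_injective (by
    rw [Functor.map_comp, hs, Category.assoc, hu, comp_zero, Functor.map_zero])
  have hs0 : s = 0 := hX.eq_zero_of_factorsThru_from_shift hW
    (hg s (hsg ▸ .zero hX.toIsAdditiveClosed))
  rw [← cancel_epi e.hom, comp_zero, ← hs, hs0, Functor.map_zero]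

lemma isWeakKernelModulo_of_isMonoModulo {A B Q : C} {g : A ⟶ B} {c : B ⟶ Q}
    {γ : Q ⟶ A⟦(1 : ℤ)⟧} (hg : IsMonoModulo X g) (hT : Triangle.mk g c γ ∈ distTriang C) :
    IsWeakKernelModulo X g c := by
  have hgc : g ≫ c = 0 := comp_distTriang_mor_zero₁₂ _ hT
  have hγg : γ ≫ g⟦(1 : ℤ)⟧' = 0 := comp_distTriang_mor_zero₃₁ _ hT
  constructor
  · rw [hgc]
    exact .zero hX.toIsAdditiveClosed
  · rintro T t ⟨W, p, q, hW, hpq⟩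
    have hqγ : q ≫ γ = 0 := hX.eq_zero_of_comp_shift_map_eq_zero hg hW (by
      rw [Category.assoc, hγg, comp_zero])
    obtain ⟨q', rfl⟩ : ∃ q' : W ⟶ B, q = q' ≫ c := Triangle.coyoneda_exact₃ _ hT q hqγ
    have hc : (t - p ≫ q') ≫ c = 0 := by rw [Preadditive.sub_comp, Category.assoc, hpq, sub_self]
    obtain ⟨m, hm⟩ : ∃ m : T ⟶ A, t - p ≫ q' = m ≫ g := Triangle.coyoneda_exact₂ _ hT _ hc
    refine ⟨m, ?_⟩
    rw [← hm, sub_sub_cancel]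
    exact .of_comp hW _ _

lemma isWeakCokernelModulo_of_isEpiModulo {K A B : C} {k : K ⟶ A} {f : A ⟶ B}
    {h : B ⟶ K⟦(1 : ℤ)⟧} (hf : IsEpiModulo X f) (hT : Triangle.mk k f h ∈ distTriang C) :
    IsWeakCokernelModulo X f k := by
  have hkf : k ≫ f = 0 := comp_distTriang_mor_zero₁₂ _ hT
  have hfh : f ≫ h = 0 := comp_distTriang_mor_zero₂₃ _ hT
  constructor
  · rw [hkf]
    exact .zero hX.toIsAdditiveClosed
  · rintro T t ⟨W, p, q, hW, hpq⟩
    have hp : h ≫ p⟦(1 : ℤ)⟧' = 0 := hX.eq_zero_of_factorsThru_to_shift hW (hf _ (by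
      rw [← Category.assoc, hfh, zero_comp]
      exact .zero hX.toIsAdditiveClosed))
    obtain ⟨e, rfl⟩ : ∃ e : A ⟶ W, k ≫ e = p := yoneda_exact₁_of_distTriang hT p hp
    have hk : k ≫ (t - e ≫ q) = 0 := by rw [Preadditive.comp_sub, ← Category.assoc, hpq, sub_self]
    obtain ⟨m, hm⟩ : ∃ m : B ⟶ T, t - e ≫ q = f ≫ m := Triangle.yoneda_exact₂ _ hT _ hk
    refine ⟨m, ?_⟩
    rw [← hm, sub_sub_cancel]
    exact .of_comp hW _ _

lemma exists_isWeakKernelModulo {A B : C} (f : A ⟶ B) :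
    ∃ (K : C) (k : K ⟶ A), IsWeakKernelModulo X k f ∧ IsMonoModulo X k := by
  obtain ⟨X₀, X₁, x, π, ω, hX₀, hX₁, hB⟩ := hX.exists_triangle B
  obtain ⟨K, k, h, hT⟩ := distinguished_cocone_triangle₁ (biprod.desc f π)
  exact ⟨K, k ≫ biprod.fst, isWeakKernelModulo_of_distTriang (hX.xEpic_of_distTriang hX₀ hB)
    hX₁ hT, hX.isMonoModulo_of_distTriang hX₀ hX₁ hB hT⟩

lemma exists_isWeakCokernelModulo {A B : C} (f : A ⟶ B) :
    ∃ (Q : C) (c : B ⟶ Q), IsWeakCokernelModulo X c f ∧ IsEpiModulo X c := by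
  obtain ⟨X₀, X₁, α, a, b, hX₀, hX₁, hA⟩ := hX.exists_triangle_from A
  obtain ⟨Q, c, γ, hT⟩ := distinguished_cocone_triangle (biprod.lift f α)
  exact ⟨Q, biprod.inl ≫ c, isWeakCokernelModulo_of_distTriang
    (hX.xMonic_of_distTriang hX₁ hA) hX₀ hT, hX.isEpiModulo_of_distTriang hX₀ hX₁ hA hT⟩

end IsClusterTilting

section Abelian

variable {X : C → Prop} [hX : Fact (IsClusterTilting X)]

instance : Fact (IsAdditiveClosed X) := ⟨hX.out.toIsAdditiveClosed⟩

instance : HasKernels (QuotCat X) where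
  has_limit φ := by
    obtain ⟨f, rfl⟩ := (quotFunctor X).map_surjective φ
    obtain ⟨K, k, hk, hmono⟩ := hX.out.exists_isWeakKernelModulo f
    have := (mono_quotFunctor_map_iff k).2 hmono
    exact ⟨_, hk.isLimit⟩

instance : HasCokernels (QuotCat X) where
  has_colimit φ := by
    obtain ⟨f, rfl⟩ := (quotFunctor X).map_surjective φ
    obtain ⟨Q, c, hc, hepi⟩ := hX.out.exists_isWeakCokernelModulo f
    have := (epi_quotFunctor_map_iff c).2 hepi
    exact ⟨_, hc.isColimit⟩

instance : IsNormalMonoCategory (QuotCat X) where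
  normalMonoOfMono φ _ := by
    obtain ⟨g, rfl⟩ := (quotFunctor X).map_surjective φ
    obtain ⟨Q, c, γ, hT⟩ := distinguished_cocone_triangle g
    have hg := hX.out.isWeakKernelModulo_of_isMonoModulo ((mono_quotFunctor_map_iff g).1 ‹_›) hT
    exact ⟨⟨_, _, _, hg.isLimit⟩⟩

instance : IsNormalEpiCategory (QuotCat X) where
  normalEpiOfEpi φ _ := by
    obtain ⟨f, rfl⟩ := (quotFunctor X).map_surjective φ
    obtain ⟨K, k, h, hT⟩ := distinguished_cocone_triangle₁ f
    have hf := hX.out.isWeakCokernelModulo_of_isEpiModulo ((epi_quotFunctor_map_iff f).1 ‹_›) hT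
    exact ⟨⟨_, _, _, hf.isColimit⟩⟩

end Abelian

theorem quotient_by_cluster_tilting_is_abelian_general
    (X : C → Prop) (hX : IsClusterTilting X) :
    Nonempty (Abelian (QuotCat X)) := by
  have : Fact (IsClusterTilting X) := ⟨hX⟩
  exact ⟨Abelian.mk⟩

/-- If `C` is a triangulated category with split idempotents and `X` is a
cluster-tilting subcategory of `C`, then the additive quotient category `C/X` is abelian. -/
theorem quotient_by_cluster_tilting_is_abelian [IsIdempotentComplete C]
    (X : C → Prop) (hX : IsClusterTilting X) :
    Nonempty (Abelian (QuotCat X)) :=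
  quotient_by_cluster_tilting_is_abelian_general X hX
end

section
/- Let X be a cluster-tilting subcategory of a triangulated category C with split idempotents, and let A →f B →g D →h ΣA be a distinguished triangle in C. Then ḡ is an epimorphism in the quotient category C/X if and only if h̄ = 0 in C/X, that is, if and only if h factors through an object of X. -/
/-!
Fix a triangle `X₀ ⟶ X₁ ⟶ E ⟶[s] ΣX₀` with `X₀, X₁ ∈ X`. Since `Hom(X, ΣX₀) = 0` and every
morphism killed by `s` factors through `X₁`, two morphisms into `E` become equal in `C/X` exactly
when they agree after composing with `s`; so this relation is an equivalence.
If `h` factors through `X` and `g ≫ e ≫ s = 0`, then `e ≫ s = h ≫ w` for some `w : ΣA ⟶ ΣX₀`,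
which vanishes because `h` factors through `X`; hence `ē = 0` and `ḡ` is epic.
Conversely `ḡ ≫ h̄ = 0`, so `h̄ = 0` as soon as `ḡ` is epic.
-/

open CategoryTheory CategoryTheory.Limits CategoryTheory.Pretriangulated

universe v u

variable {C : Type u} [Category.{v} C] [Preadditive C] [HasZeroObject C]
  [HasShift C ℤ] [∀ n : ℤ, (shiftFunctor C n).Additive] [Pretriangulated C]

section ClusterTilting

variable {X : C → Prop}

lemma IsClusterTilting.comp_eq_zero_of_factorsThru (hX : IsClusterTilting X) {A B Y : C}
    {φ : A ⟶ B} (hφ : FactorsThru X φ) (hY : X Y) (u : B ⟶ Y⟦(1 : ℤ)⟧) : φ ≫ u = 0 := by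
  obtain ⟨Z, p, q, hZ, rfl⟩ := hφ
  rw [Category.assoc, hX.hom_shift_zero hZ hY (q ≫ u), comp_zero]

lemma factorsThru_of_comp_eq_zero {A B X₀ X₁ : C} (hX₁ : X X₁) {f : X₀ ⟶ X₁} {t : X₁ ⟶ B}
    {s : B ⟶ X₀⟦(1 : ℤ)⟧} (hT : Triangle.mk f t s ∈ distTriang C) {φ : A ⟶ B}
    (hφ : φ ≫ s = 0) : FactorsThru X φ := by
  obtain ⟨e, he⟩ := Triangle.coyoneda_exact₃ _ hT φ hφ
  exact ⟨X₁, e, t, hX₁, he.symm⟩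

lemma IsClusterTilting.homRelOf_iff (hX : IsClusterTilting X) {A B X₀ X₁ : C} (hX₀ : X X₀)
    (hX₁ : X X₁) {f : X₀ ⟶ X₁} {t : X₁ ⟶ B} {s : B ⟶ X₀⟦(1 : ℤ)⟧}
    (hT : Triangle.mk f t s ∈ distTriang C) (φ ψ : A ⟶ B) :
    homRelOf X φ ψ ↔ φ ≫ s = ψ ≫ s := by
  rw [← sub_eq_zero, ← Preadditive.sub_comp]
  exact ⟨fun H => hX.comp_eq_zero_of_factorsThru H hX₀ s, factorsThru_of_comp_eq_zero hX₁ hT⟩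

lemma IsClusterTilting.congruence_homRelOf (hX : IsClusterTilting X) :
    Congruence (homRelOf X) where
  equivalence {A B} := by
    obtain ⟨X₀, X₁, f, t, s, hX₀, hX₁, hT⟩ := hX.exists_triangle B
    have hs := hX.homRelOf_iff (A := A) hX₀ hX₁ hT
    exact ⟨fun φ => (hs φ φ).2 rfl, fun H => (hs _ _).2 ((hs _ _).1 H).symm,
      fun H H' => (hs _ _).2 (((hs _ _).1 H).trans ((hs _ _).1 H'))⟩
  comp_left a _ _ H := by
    obtain ⟨Y, p, q, hY, hpq⟩ := H
    exact ⟨Y, a ≫ p, q, hY, by rw [Category.assoc, hpq, Preadditive.comp_sub]⟩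
  comp_right b H := by
    obtain ⟨Y, p, q, hY, hpq⟩ := H
    exact ⟨Y, p, q ≫ b, hY, by rw [← Category.assoc, hpq, Preadditive.sub_comp]⟩

lemma IsClusterTilting.homRelOf_of_homRelOf_comp (hX : IsClusterTilting X) {A B D E : C}
    {f : A ⟶ B} {g : B ⟶ D} {h : D ⟶ A⟦(1 : ℤ)⟧} (hT : Triangle.mk f g h ∈ distTriang C)
    (hh : FactorsThru X h) {e e' : D ⟶ E} (H : homRelOf X (g ≫ e) (g ≫ e')) :
    homRelOf X e e' := by
  obtain ⟨X₀, X₁, f', t, s, hX₀, hX₁, hT'⟩ := hX.exists_triangle E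
  rw [hX.homRelOf_iff hX₀ hX₁ hT'] at H ⊢
  suffices (e - e') ≫ s = 0 by rwa [Preadditive.sub_comp, sub_eq_zero] at this
  obtain ⟨w, hw⟩ : ∃ w, (e - e') ≫ s = h ≫ w := Triangle.yoneda_exact₃ _ hT _ (by
    change g ≫ (e - e') ≫ s = 0
    rw [Preadditive.sub_comp, Preadditive.comp_sub, ← Category.assoc, ← Category.assoc, H,
      sub_self])
  rw [hw]
  exact hX.comp_eq_zero_of_factorsThru hh hX₀ w

end ClusterTilting

theorem epi_iff_factorsThru_general
    (X : C → Prop) (hX : IsClusterTilting X)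
    {A B D : C} (f : A ⟶ B) (g : B ⟶ D) (h : D ⟶ A⟦(1 : ℤ)⟧)
    (hT : Triangle.mk f g h ∈ distTriang C) :
    Epi ((quotFunctor X).map g) ↔ FactorsThru X h := by
  have := hX.congruence_homRelOf
  constructor
  · intro _
    have hgh : (quotFunctor X).map g ≫ (quotFunctor X).map h =
        (quotFunctor X).map g ≫ (quotFunctor X).map 0 := by
      have : g ≫ h = 0 := comp_distTriang_mor_zero₂₃ _ hT
      rw [← Functor.map_comp, ← Functor.map_comp, this, comp_zero]
    simpa only [homRelOf, sub_zero] using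
      (Quotient.functor_map_eq_iff _ _ _).mp ((cancel_epi _).mp hgh)
  · refine fun hh => ⟨fun {E} φ ψ H => ?_⟩
    obtain ⟨e, rfl⟩ := (quotFunctor X).map_surjective φ
    obtain ⟨e', rfl⟩ := (quotFunctor X).map_surjective ψ
    rw [← Functor.map_comp, ← Functor.map_comp, Quotient.functor_map_eq_iff] at H
    exact (Quotient.functor_map_eq_iff _ _ _).mpr (hX.homRelOf_of_homRelOf_comp hT hh H)

/-- For a distinguished triangle `A ⟶ B ⟶ D ⟶ ΣA` over a cluster-tilting
subcategory `X`, the class `ḡ` is an epimorphism in `C/X` iff `h` factors through `X`. -/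
theorem epi_iff_factorsThru [IsIdempotentComplete C]
    (X : C → Prop) (hX : IsClusterTilting X)
    {A B D : C} (f : A ⟶ B) (g : B ⟶ D) (h : D ⟶ A⟦(1 : ℤ)⟧)
    (hT : Triangle.mk f g h ∈ distTriang C) :
    Epi ((quotFunctor X).map g) ↔ FactorsThru X h :=
  epi_iff_factorsThru_general X hX f g h hT
end

section
/- Let X be a cluster-tilting subcategory of a triangulated category C with split idempotents, and let A₀ →f₀ A₁ →f₁ A₂ →f₂ ΣA₀ be a distinguished triangle in C. If the morphism Σ⁻¹f₂ : Σ⁻¹A₂ → A₀ factors through an object of X (i.e. its class in C/X is zero), then in the quotient category C/X the morphism f̄₀ is a kernel of f̄₁; equivalently, the sequence 0 → A₀ → A₁ → A₂ is left exact in C/X. -/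
open CategoryTheory CategoryTheory.Limits CategoryTheory.Pretriangulated

universe v u

variable {C : Type u} [Category.{v} C] [Preadditive C] [HasZeroObject C]
  [HasShift C ℤ] [∀ n : ℤ, (shiftFunctor C n).Additive] [Pretriangulated C]

/-!
The hypothesis on `Σ⁻¹f₂` is exploited through rigidity, `Hom(X, ΣX) = 0`. It makes `f₂`, which
factors through `ΣX`, vanish on `X`; so for `c : Z ⟶ A₁` with `c ≫ f₁ = a ≫ b` through `Y ∈ X`,
`b` lifts along `f₁` and `c` minus a map through `Y` lifts along `f₀`. It also makes every
`A₀ ⟶ ΣX` extend along `f₀`, so a morphism `h` with `h ≫ f₀` through `X` is killed by the last map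
`A₀ ⟶ ΣX₀` of an `X`-approximation triangle of `A₀` and factors through `X₁`: `f̄₀` is a
monomorphism in `C/X`.
-/

variable {X : C → Prop}

section Additive

omit [HasZeroObject C] [HasShift C ℤ] [∀ n : ℤ, (shiftFunctor C n).Additive] [Pretriangulated C]

omit [Preadditive C] in
lemma FactorsThru.precomp {A B D : C} (f : A ⟶ B) {g : B ⟶ D} (hg : FactorsThru X g) :
    FactorsThru X (f ≫ g) := by
  obtain ⟨P, u, v, hP, rfl⟩ := hg
  exact ⟨P, f ≫ u, v, hP, by simp⟩

omit [Preadditive C] in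
lemma FactorsThru.postcomp {A B D : C} {f : A ⟶ B} (hf : FactorsThru X f) (g : B ⟶ D) :
    FactorsThru X (f ≫ g) := by
  obtain ⟨P, u, v, hP, rfl⟩ := hf
  exact ⟨P, u, v ≫ g, hP, by simp⟩

lemma FactorsThru.neg_s6 {A B : C} {f : A ⟶ B} (hf : FactorsThru X f) : FactorsThru X (-f) := by
  obtain ⟨P, u, v, hP, rfl⟩ := hf
  exact ⟨P, -u, v, hP, by simp⟩

namespace IsAdditiveClosed

open ZeroObject

lemma factorsThru_zero [HasZeroObject C] (hX : IsAdditiveClosed X) (A B : C) :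
    FactorsThru X (0 : A ⟶ B) :=
  ⟨0, 0, 0, hX.zero 0 (isZero_zero C), by simp⟩

lemma factorsThru_add [HasBinaryBiproducts C] (hX : IsAdditiveClosed X) {A B : C}
    {f g : A ⟶ B} (hf : FactorsThru X f) (hg : FactorsThru X g) : FactorsThru X (f + g) := by
  obtain ⟨P, u₁, v₁, hP, rfl⟩ := hf
  obtain ⟨Q, u₂, v₂, hQ, rfl⟩ := hg
  refine ⟨P ⊞ Q, biprod.lift u₁ u₂, biprod.desc v₁ v₂,
    hX.biprod _ ⟨BinaryBiproduct.isBilimit P Q⟩ hP hQ, by simp⟩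

variable [HasZeroObject C] [HasBinaryBiproducts C] (hX : IsAdditiveClosed X)
include hX

lemma congruence : Congruence (homRelOf X) where
  equivalence :=
    { refl := fun f => by
        simpa [homRelOf] using hX.factorsThru_zero _ _
      symm := fun {f g} h => by
        simpa [homRelOf] using h.neg_s6
      trans := fun {f g h} h₁ h₂ => by
        simpa [homRelOf] using hX.factorsThru_add h₁ h₂ }
  comp_left f _ _ h := by
    simpa [homRelOf, Preadditive.comp_sub] using FactorsThru.precomp f h
  comp_right g h := by
    simpa [homRelOf, Preadditive.sub_comp] using FactorsThru.postcomp h g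

lemma map_eq_map_iff {A B : C} (f g : A ⟶ B) :
    (quotFunctor X).map f = (quotFunctor X).map g ↔ FactorsThru X (f - g) :=
  have := hX.congruence
  Quotient.functor_map_eq_iff _ f g

lemma map_eq_zero_iff {A B : C} (f : A ⟶ B) :
    (quotFunctor X).map f = (quotFunctor X).map 0 ↔ FactorsThru X f := by
  rw [hX.map_eq_map_iff, sub_zero]

end IsAdditiveClosed

end Additive

namespace IsClusterTilting

variable (hX : IsClusterTilting X)
include hX

lemma comp_eq_zero_of_factorsThru_shift {A B Y : C} {f : A ⟶ B⟦(1 : ℤ)⟧}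
    (hf : FactorsThru X
      (f⟦(-1 : ℤ)⟧' ≫ (shiftFunctorCompIsoId C (1 : ℤ) (-1 : ℤ) (add_neg_cancel 1)).hom.app B))
    (hY : X Y) (b : Y ⟶ A) : b ≫ f = 0 := by
  obtain ⟨P, p, q, hP, hpq⟩ := hf
  have hf_shift : f⟦(-1 : ℤ)⟧' =
      p ≫ q ≫ (shiftFunctorCompIsoId C (1 : ℤ) (-1 : ℤ) (add_neg_cancel 1)).inv.app B := by
    rw [← Category.assoc, hpq]; simp
  have hf_eq : f = (shiftFunctorCompIsoId C (-1 : ℤ) (1 : ℤ) (neg_add_cancel 1)).inv.app A ≫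
      (p ≫ q ≫ (shiftFunctorCompIsoId C (1 : ℤ) (-1 : ℤ) (add_neg_cancel 1)).inv.app B)⟦1⟧' ≫
      (shiftFunctorCompIsoId C (-1 : ℤ) (1 : ℤ) (neg_add_cancel 1)).hom.app _ := by
    rw [← hf_shift, shift_neg_shift']; simp
  have hbp : b ≫ (shiftFunctorCompIsoId C (-1 : ℤ) (1 : ℤ) (neg_add_cancel 1)).inv.app A ≫
      p⟦(1 : ℤ)⟧' = 0 := hX.hom_shift_zero hY hP _
  rw [hf_eq]
  simp only [Functor.map_comp, Category.assoc, reassoc_of% hbp, Limits.zero_comp]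

lemma factorsThru_of_factorsThru_comp {A B Z : C} {f : A ⟶ B}
    (hf : ∀ Y : C, X Y → ∀ ε : A ⟶ Y⟦(1 : ℤ)⟧, ∃ ε' : B ⟶ Y⟦(1 : ℤ)⟧, ε = f ≫ ε')
    {h : Z ⟶ A} (hh : FactorsThru X (h ≫ f)) : FactorsThru X h := by
  obtain ⟨Y₀, Y₁, _, g, ε, hY₀, hY₁, hT⟩ := hX.exists_triangle A
  obtain ⟨ε', rfl⟩ := hf Y₀ hY₀ ε
  obtain ⟨P, u, v, hP, huv⟩ := hh
  have hε : h ≫ f ≫ ε' = 0 := by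
    rw [← Category.assoc, ← huv, Category.assoc, hX.hom_shift_zero hP hY₀ (v ≫ ε'),
      Limits.comp_zero]
  obtain ⟨t, rfl⟩ := Triangle.coyoneda_exact₃ _ hT h hε
  exact ⟨Y₁, t, g, hY₁, rfl⟩

lemma map_cancel_right {A B Z : C} {f : A ⟶ B}
    (hf : ∀ Y : C, X Y → ∀ ε : A ⟶ Y⟦(1 : ℤ)⟧, ∃ ε' : B ⟶ Y⟦(1 : ℤ)⟧, ε = f ≫ ε')
    {g h : Z ⟶ A} (hgh : (quotFunctor X).map (g ≫ f) = (quotFunctor X).map (h ≫ f)) :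
    (quotFunctor X).map g = (quotFunctor X).map h := by
  rw [hX.map_eq_map_iff, ← Preadditive.sub_comp] at hgh
  exact (hX.map_eq_map_iff _ _).2 (hX.factorsThru_of_factorsThru_comp hf hgh)

variable {A₀ A₁ A₂ : C} {f₀ : A₀ ⟶ A₁} {f₁ : A₁ ⟶ A₂} {f₂ : A₂ ⟶ A₀⟦(1 : ℤ)⟧}
  (hT : Triangle.mk f₀ f₁ f₂ ∈ distTriang C)
  (hf₂ : FactorsThru X
    (f₂⟦(-1 : ℤ)⟧' ≫ (shiftFunctorCompIsoId C (1 : ℤ) (-1 : ℤ) (add_neg_cancel 1)).hom.app A₀))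
include hT hf₂

lemma exists_eq_comp_of_factorsThru_shift (Y : C) (hY : X Y) (ε : A₀ ⟶ Y⟦(1 : ℤ)⟧) :
    ∃ ε' : A₁ ⟶ Y⟦(1 : ℤ)⟧, ε = f₀ ≫ ε' := by
  obtain ⟨P, p, q, hP, hpq⟩ := hf₂
  refine Triangle.yoneda_exact₂ _ (inv_rot_of_distTriang _ hT) ε ?_
  change (-(f₂⟦(-1 : ℤ)⟧' ≫
    (shiftFunctorCompIsoId C (1 : ℤ) (-1 : ℤ) (add_neg_cancel 1)).hom.app A₀)) ≫ ε = 0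
  rw [← hpq, Preadditive.neg_comp, Category.assoc, hX.hom_shift_zero hP hY (q ≫ ε),
    Limits.comp_zero, neg_zero]

lemma exists_factorsThru_sub_comp {Z : C} {c : Z ⟶ A₁} (hc : FactorsThru X (c ≫ f₁)) :
    ∃ d : Z ⟶ A₀, FactorsThru X (c - d ≫ f₀) := by
  obtain ⟨Y, a, b, hY, hab⟩ := hc
  obtain ⟨b', rfl⟩ : ∃ b' : Y ⟶ A₁, b = b' ≫ f₁ := Triangle.coyoneda_exact₃ _ hT b
    (hX.comp_eq_zero_of_factorsThru_shift hf₂ hY b)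
  have hcf₁ : (c - a ≫ b') ≫ f₁ = 0 := by
    rw [Preadditive.sub_comp, Category.assoc, hab, sub_self]
  obtain ⟨d, hd⟩ : ∃ d : Z ⟶ A₀, c - a ≫ b' = d ≫ f₀ := Triangle.coyoneda_exact₂ _ hT _ hcf₁
  exact ⟨d, ⟨Y, a, b', hY, by rw [← hd, sub_sub_cancel]⟩⟩

end IsClusterTilting

/-- For a distinguished triangle `A₀ ⟶ A₁ ⟶ A₂ ⟶ ΣA₀` over a cluster-tilting
subcategory `X`, if `Σ⁻¹f₂ : Σ⁻¹A₂ ⟶ A₀` factors through `X` then `f̄₀` is a kernel of `f̄₁`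
in `C/X`. -/
theorem kernel_of_factorsThru
    (X : C → Prop) (hX : IsClusterTilting X)
    {A₀ A₁ A₂ : C} (f₀ : A₀ ⟶ A₁) (f₁ : A₁ ⟶ A₂) (f₂ : A₂ ⟶ A₀⟦(1 : ℤ)⟧)
    (hT : Triangle.mk f₀ f₁ f₂ ∈ distTriang C)
    (hf₂ : FactorsThru X
      (f₂⟦(-1 : ℤ)⟧' ≫ (shiftFunctorCompIsoId C (1 : ℤ) (-1 : ℤ) (by omega)).hom.app A₀)) :
    (quotFunctor X).map f₀ ≫ (quotFunctor X).map f₁ = (quotFunctor X).map (0 : A₀ ⟶ A₂) ∧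
    ∀ (Z : C) (φ : (quotFunctor X).obj Z ⟶ (quotFunctor X).obj A₁),
      φ ≫ (quotFunctor X).map f₁ = (quotFunctor X).map (0 : Z ⟶ A₂) →
      ∃! ψ : (quotFunctor X).obj Z ⟶ (quotFunctor X).obj A₀,
        ψ ≫ (quotFunctor X).map f₀ = φ := by
  refine ⟨?_, fun Z φ hφ => ?_⟩
  · rw [← Functor.map_comp]
    exact congrArg _ (comp_distTriang_mor_zero₁₂ _ hT)
  obtain ⟨c, rfl⟩ := (quotFunctor X).map_surjective φ
  rw [← Functor.map_comp, hX.map_eq_zero_iff] at hφ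
  obtain ⟨d, hd⟩ := hX.exists_factorsThru_sub_comp hT hf₂ hφ
  have hdc : (quotFunctor X).map d ≫ (quotFunctor X).map f₀ = (quotFunctor X).map c := by
    rw [← Functor.map_comp]
    exact ((hX.map_eq_map_iff _ _).2 hd).symm
  refine ⟨_, hdc, fun ψ hψ => ?_⟩
  obtain ⟨m, rfl⟩ := (quotFunctor X).map_surjective ψ
  refine hX.map_cancel_right (hX.exists_eq_comp_of_factorsThru_shift hT hf₂) ?_
  rw [Functor.map_comp, Functor.map_comp, hψ, hdc]
end

section
/- Let X be a cluster-tilting subcategory of a triangulated category C with split idempotents, and let A₀ →f₀ A₁ →f₁ A₂ →f₂ ΣA₀ be a distinguished triangle in C. If f̄₁ is an epimorphism in the quotient category C/X, then f₀ is X-monic, i.e. every morphism from A₀ to an object of X factors through f₀. -/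
open CategoryTheory CategoryTheory.Limits CategoryTheory.Pretriangulated

universe v u

variable {C : Type u} [Category.{v} C] [Preadditive C] [HasZeroObject C]
  [HasShift C ℤ] [∀ n : ℤ, (shiftFunctor C n).Additive] [Pretriangulated C]

/-!
A morphism `u : A₀ ⟶ X'` extends along `f₀` exactly when `f₂ ≫ Σu = 0`. Since
`f₁ ≫ f₂ ≫ Σu = 0` and `f̄₁` is epi, `f₂ ≫ Σu` vanishes in `C/X`, i.e. factors through an
object of `X`; such a morphism into `ΣX'` is zero because `Hom(X, ΣX) = 0`.
-/

lemma CategoryTheory.Pretriangulated.yoneda_exact₁ (T : Triangle C) (hT : T ∈ distTriang C)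
    {Y : C} (u : T.obj₁ ⟶ Y) (hu : T.mor₃ ≫ u⟦(1 : ℤ)⟧' = 0) :
    ∃ v : T.obj₂ ⟶ Y, T.mor₁ ≫ v = u := by
  obtain ⟨g, hg⟩ := Triangle.yoneda_exact₂ _ (rot_of_distTriang _ (rot_of_distTriang _ hT))
    (u⟦(1 : ℤ)⟧') hu
  obtain ⟨g', rfl⟩ : ∃ g' : T.obj₂ ⟶ Y, g'⟦(1 : ℤ)⟧' = g := Functor.map_surjective _ g
  refine ⟨-g', (shiftFunctor C (1 : ℤ)).map_injective ?_⟩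
  rw [hg, Functor.map_comp, Functor.map_neg, Preadditive.comp_neg, ← Preadditive.neg_comp]
  rfl

lemma IsAdditiveClosed.congruence_s10 {X : C → Prop} (hX : IsAdditiveClosed X) :
    Congruence (homRelOf X) where
  equivalence :=
    { refl := fun _ =>
        ⟨_, 0, 0, hX.zero _ (isZero_zero C), by simp⟩
      symm := fun ⟨Y, a, b, hY, hab⟩ =>
        ⟨Y, -a, b, hY, by rw [Preadditive.neg_comp, hab, neg_sub]⟩
      trans := fun ⟨Y, a, b, hY, hab⟩ ⟨Z, c, d, hZ, hcd⟩ =>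
        ⟨Y ⊞ Z, biprod.lift a c, biprod.desc b d,
          hX.biprod _ ⟨BinaryBiproduct.isBilimit Y Z⟩ hY hZ,
          by rw [biprod.lift_desc, hab, hcd, sub_add_sub_cancel]⟩ }
  comp_left := fun f _ _ ⟨Y, a, b, hY, hab⟩ =>
    ⟨Y, f ≫ a, b, hY, by rw [Category.assoc, hab, Preadditive.comp_sub]⟩
  comp_right := fun g ⟨Y, a, b, hY, hab⟩ =>
    ⟨Y, a, b ≫ g, hY, by rw [← Category.assoc, hab, Preadditive.sub_comp]⟩

lemma IsAdditiveClosed.factorsThru_of_map_eq_map_zero {X : C → Prop} (hX : IsAdditiveClosed X)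
    {A B : C} {f : A ⟶ B} (hf : (quotFunctor X).map f = (quotFunctor X).map 0) :
    FactorsThru X f := by
  have := hX.congruence_s10
  simpa [homRelOf] using (Quotient.functor_map_eq_iff _ f 0).mp hf

lemma IsClusterTilting.eq_zero_of_factorsThru {X : C → Prop} (hX : IsClusterTilting X)
    {A X' : C} (hX' : X X') {g : A ⟶ X'⟦(1 : ℤ)⟧} (hg : FactorsThru X g) : g = 0 := by
  obtain ⟨X'', a, b, hX'', rfl⟩ := hg
  rw [hX.hom_shift_zero hX'' hX' b, comp_zero]

lemma IsClusterTilting.eq_zero_of_comp_eq_zero {X : C → Prop} (hX : IsClusterTilting X)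
    {A B X' : C} (hX' : X X') (f : A ⟶ B) [Epi ((quotFunctor X).map f)]
    {g : B ⟶ X'⟦(1 : ℤ)⟧} (hfg : f ≫ g = 0) : g = 0 := by
  refine hX.eq_zero_of_factorsThru hX' (hX.factorsThru_of_map_eq_map_zero ?_)
  rw [← cancel_epi ((quotFunctor X).map f), ← Functor.map_comp, ← Functor.map_comp, hfg,
    comp_zero]

theorem xmonic_of_epi_general
    (X : C → Prop) (hX : IsClusterTilting X)
    {A₀ A₁ A₂ : C} (f₀ : A₀ ⟶ A₁) (f₁ : A₁ ⟶ A₂) (f₂ : A₂ ⟶ A₀⟦(1 : ℤ)⟧)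
    (hT : Triangle.mk f₀ f₁ f₂ ∈ distTriang C)
    (hepi : Epi ((quotFunctor X).map f₁)) :
    XMonic X f₀ := by
  intro X' hX' u
  have hf₁f₂ : f₁ ≫ f₂ = 0 := comp_distTriang_mor_zero₂₃ _ hT
  have hu : f₂ ≫ u⟦(1 : ℤ)⟧' = 0 :=
    hX.eq_zero_of_comp_eq_zero hX' f₁ (by rw [← Category.assoc, hf₁f₂, zero_comp])
  exact yoneda_exact₁ _ hT u hu

/-- For a distinguished triangle `A₀ ⟶ A₁ ⟶ A₂ ⟶ ΣA₀` over a cluster-tilting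
subcategory `X`, if `f̄₁` is an epimorphism in `C/X` then `f₀` is `X`-monic. -/
theorem xmonic_of_epi [IsIdempotentComplete C]
    (X : C → Prop) (hX : IsClusterTilting X)
    {A₀ A₁ A₂ : C} (f₀ : A₀ ⟶ A₁) (f₁ : A₁ ⟶ A₂) (f₂ : A₂ ⟶ A₀⟦(1 : ℤ)⟧)
    (hT : Triangle.mk f₀ f₁ f₂ ∈ distTriang C)
    (hepi : Epi ((quotFunctor X).map f₁)) :
    XMonic X f₀ :=
  xmonic_of_epi_general X hX f₀ f₁ f₂ hT hepi
end

section
/- Let X be a cluster-tilting subcategory of a triangulated category C with split idempotents. Then for every object A of C there exist an object X₁ ∈ X and a morphism α: Σ⁻¹X₁ → A in C whose class ᾱ is an epimorphism in the quotient category C/X. Consequently the abelian category C/X has enough projectives (it is projectively generated). -/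
/-! If `U ⟶ A ⟶ W ⟶ U⟦1⟧` is distinguished with `W ∈ X` and every map from `U` to `X` zero, then
`U ⟶ A` is epi modulo `X`: if its composite with `d : A ⟶ Z` factors through `X`, that composite
is zero, so `d` factors through `W`. The same vanishing
makes `U` projective in `C/X`: for `e` epi modulo `X`, the cone map of `e` factors through `X`, so
its composite with any map from `U` is zero and that map lifts along `e`. Rotating the
cluster-tilting triangle `X₀ ⟶ X₁ ⟶ A⟦1⟧ ⟶ X₀⟦1⟧` and shifting it by `-1` gives such a triangle with
`U = X₁⟦-1⟧`, as `Hom(X₁⟦-1⟧, X) ≅ Hom(X₁, X⟦1⟧) = 0`. -/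

open CategoryTheory CategoryTheory.Limits CategoryTheory.Pretriangulated

universe v u

variable {C : Type u} [Category.{v} C] [Preadditive C] [HasZeroObject C]
  [HasShift C ℤ] [∀ n : ℤ, (shiftFunctor C n).Additive] [Pretriangulated C]

namespace FactorsThru

variable {X : C → Prop}

lemma precomp_s13 {A B B' : C} {f : B ⟶ B'} (hf : FactorsThru X f) (g : A ⟶ B) :
    FactorsThru X (g ≫ f) :=
  let ⟨P, a, b, hP, hab⟩ := hf
  ⟨P, g ≫ a, b, hP, by rw [Category.assoc, hab]⟩

lemma comp {A A' B : C} {f : A ⟶ A'} (hf : FactorsThru X f) (g : A' ⟶ B) :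
    FactorsThru X (f ≫ g) :=
  let ⟨P, a, b, hP, hab⟩ := hf
  ⟨P, a, b ≫ g, hP, by rw [← Category.assoc, hab]⟩

lemma eq_zero {U B : C} {f : U ⟶ B} (hf : FactorsThru X f)
    (hU : ∀ P, X P → ∀ a : U ⟶ P, a = 0) : f = 0 :=
  let ⟨P, a, b, hP, hab⟩ := hf
  by rw [← hab, hU P hP a, zero_comp]

end FactorsThru

namespace IsAdditiveClosed

open ZeroObject

variable {X : C → Prop}

lemma congruence_homRelOf (hX : IsAdditiveClosed X) : Congruence (homRelOf X) where
  equivalence :=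
    { refl := fun _ => ⟨0, 0, 0, hX.zero 0 (isZero_zero C), by simp⟩
      symm := fun ⟨P, a, b, hP, hab⟩ =>
        ⟨P, -a, b, hP, by rw [Preadditive.neg_comp, hab, neg_sub]⟩
      trans := fun ⟨P, a, b, hP, hab⟩ ⟨Q, c, d, hQ, hcd⟩ =>
        ⟨P ⊞ Q, biprod.lift a c, biprod.desc b d,
          hX.biprod _ ⟨BinaryBiproduct.isBilimit P Q⟩ hP hQ,
          by rw [biprod.lift_desc, hab, hcd, sub_add_sub_cancel]⟩ }
  comp_left := by
    intro _ _ _ f _ _ h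
    simpa only [homRelOf, Preadditive.comp_sub] using FactorsThru.precomp_s13 h f
  comp_right := by
    intro _ _ _ _ _ g h
    simpa only [homRelOf, Preadditive.sub_comp] using FactorsThru.comp h g

lemma epi_quotFunctor_map_mor₁ (hX : IsAdditiveClosed X) {T : Triangle C}
    (hT : T ∈ distTriang C) (h₃ : X T.obj₃)
    (h₁ : ∀ P, X P → ∀ a : T.obj₁ ⟶ P, a = 0) :
    Epi ((quotFunctor X).map T.mor₁) := by
  have := hX.congruence_homRelOf
  refine ⟨fun {Z} u v huv => ?_⟩
  obtain ⟨Z⟩ := Z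
  obtain ⟨u, rfl⟩ := (quotFunctor X).map_surjective u
  obtain ⟨v, rfl⟩ := (quotFunctor X).map_surjective v
  rw [← Functor.map_comp, ← Functor.map_comp, Quotient.functor_map_eq_iff] at huv
  have huv₀ : T.mor₁ ≫ (u - v) = 0 := by
    rw [Preadditive.comp_sub]
    exact huv.eq_zero h₁
  obtain ⟨w, hw⟩ := T.yoneda_exact₂ hT (u - v) huv₀
  exact (Quotient.functor_map_eq_iff _ _ _).2 ⟨T.obj₃, T.mor₂, w, h₃, hw.symm⟩

lemma projective_quotFunctor_obj (hX : IsAdditiveClosed X) {U : C}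
    (hU : ∀ P, X P → ∀ a : U ⟶ P, a = 0) :
    Projective ((quotFunctor X).obj U) := by
  have := hX.congruence_homRelOf
  refine ⟨fun {E Y} f e he => ?_⟩
  obtain ⟨E⟩ := E
  obtain ⟨Y⟩ := Y
  obtain ⟨e, rfl⟩ := (quotFunctor X).map_surjective e
  obtain ⟨f, rfl⟩ := (quotFunctor X).map_surjective f
  obtain ⟨Z, u, _, hT⟩ := distinguished_cocone_triangle e
  have hu : (quotFunctor X).map u = (quotFunctor X).map 0 := by
    rw [← cancel_epi ((quotFunctor X).map e), ← Functor.map_comp, ← Functor.map_comp,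
      show e ≫ u = 0 from comp_distTriang_mor_zero₁₂ _ hT, comp_zero]
  rw [Quotient.functor_map_eq_iff, homRelOf, sub_zero] at hu
  obtain ⟨k, hk⟩ := Triangle.coyoneda_exact₂ _ hT f ((hu.precomp_s13 f).eq_zero hU)
  exact ⟨(quotFunctor X).map k, by rw [hk]; exact ((quotFunctor X).map_comp _ _).symm⟩

end IsAdditiveClosed

lemma IsClusterTilting.hom_shift_neg_one_eq_zero_s13 {X : C → Prop} (hX : IsClusterTilting X)
    {X₁ : C} (h₁ : X X₁) : ∀ P, X P → ∀ a : X₁⟦(-1 : ℤ)⟧ ⟶ P, a = 0 := by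
  intro P hP a
  apply (shiftFunctor C (1 : ℤ)).map_injective
  rw [← cancel_epi (shiftNegShift X₁ (1 : ℤ)).inv, Functor.map_zero, comp_zero]
  exact hX.hom_shift_zero h₁ hP _

theorem enough_projectives_general
    (X : C → Prop) (hX : IsClusterTilting X) (A : C) :
    ∃ (X₁ : C) (α : X₁⟦(-1 : ℤ)⟧ ⟶ A), X X₁ ∧ Epi ((quotFunctor X).map α) ∧
      Projective ((quotFunctor X).obj (X₁⟦(-1 : ℤ)⟧)) := by
  obtain ⟨X₀, X₁, f, g, h, hX₀, hX₁, hT⟩ := hX.exists_triangle (A⟦(1 : ℤ)⟧)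
  -- `X₁⟦-1⟧ ⟶ A⟦1⟧⟦-1⟧ ⟶ X₀⟦1⟧⟦-1⟧ ⟶ X₁⟦-1⟧⟦1⟧`
  let T := (shiftFunctor (Triangle C) (-1 : ℤ)).obj (Triangle.mk f g h).rotate
  have hT' : T ∈ distTriang C := Triangle.shift_distinguished _ (rot_of_distTriang _ hT) _
  have hU := hX.hom_shift_neg_one_eq_zero_s13 hX₁
  let e : T.obj₂ ≅ A := shiftShiftNeg A (1 : ℤ)
  have : Epi ((quotFunctor X).map T.mor₁) := hX.epi_quotFunctor_map_mor₁ hT'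
    (hX.iso (shiftShiftNeg X₀ (1 : ℤ)).symm hX₀) hU
  have hα : Epi ((quotFunctor X).map (T.mor₁ ≫ e.hom)) := by
    rw [Functor.map_comp]
    exact epi_comp _ _
  exact ⟨X₁, T.mor₁ ≫ e.hom, hX₁, hα, hX.projective_quotFunctor_obj hU⟩

/-- For every object `A` of `C` there are `X₁ ∈ X` and a morphism
`α : Σ⁻¹X₁ ⟶ A` whose class is an epimorphism in `C/X`; moreover `Σ⁻¹X₁` is projective in
`C/X`, so the quotient category has enough projectives. -/
theorem enough_projectives [IsIdempotentComplete C]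
    (X : C → Prop) (hX : IsClusterTilting X) (A : C) :
    ∃ (X₁ : C) (α : X₁⟦(-1 : ℤ)⟧ ⟶ A), X X₁ ∧ Epi ((quotFunctor X).map α) ∧
      Projective ((quotFunctor X).obj (X₁⟦(-1 : ℤ)⟧)) :=
  enough_projectives_general X hX A
end
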